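/- arXiv:2401.09845 — 9 statements merged into one kernel-verified Lean document; each statement's English description precedes it below -/
import Mathlib

section
/- If C is hierarchical (its elements can be arranged in a sequence S_1, …, S_l such that for every k = 2, …, l, (i) S_1 meets S_k, and (ii) there exists T ∈ C which misses S_k and meets each of S_1, …, S_{k−1}), then C has full span, i.e., the family of MM-games {w_S}_{S∈C} is a basis of ℝ^C. -/
open Finset
open scoped Classical

/-! Common definitions: games on a collection `C` of coalitions of a finite
player set `N`, MM-games, full span, assignments, representations, the
equitable solution, and the Shapley value. -/

/-- The MM-game `w_S`, as a vector in `ℝ^C`: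
`w_S(T) = 1` if `S` meets `T` (i.e. `S ∩ T ≠ ∅`) and `0` if `S` misses `T`. -/
noncomputable def mmGame {N : Type} [DecidableEq N] (C : Finset (Finset N))
    (S : Finset N) : {T : Finset N // T ∈ C} → ℝ :=
  fun T => if (S ∩ T.1).Nonempty then 1 else 0

/-- `C` has full span: the family of MM-games `{w_S}_{S ∈ C}` is a basis of `ℝ^C`,
i.e. it is linearly independent and spans `ℝ^C`. -/
def FullSpan {N : Type} [DecidableEq N] (C : Finset (Finset N)) : Prop :=
  LinearIndependent ℝ (fun S : {S : Finset N // S ∈ C} => mmGame C S.1) ∧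
  Submodule.span ℝ (Set.range fun S : {S : Finset N // S ∈ C} => mmGame C S.1) = ⊤

/-- The full user-set `ψ⁻¹(k) = {n ∈ N : k ∈ ψ(n)}` of facility `k`. -/
noncomputable def userSet {N K : Type} [Fintype N] (ψ : N → Finset K) (k : K) :
    Finset N :=
  Finset.univ.filter fun n => k ∈ ψ n

/-- `(ψ, γ)` is a representation of the game `v : C → ℝ`.  The set of facilities
is `K = ψ(N) = ⋃_{n ∈ N} ψ(n)` (every facility has a nonempty full user-set);
we require `ψ⁻¹(k) ∈ C` for every facility `k`, and
`v(S) = ∑_{k ∈ ψ(S)} γ(k)` for every `S ∈ C`, where `ψ(S) = ⋃_{n ∈ S} ψ(n)`. -/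
def IsRep {N : Type} [Fintype N] [DecidableEq N] (C : Finset (Finset N))
    (v : {T : Finset N // T ∈ C} → ℝ) {K : Type} (ψ : N → Finset K)
    (γ : K → ℝ) : Prop :=
  (∀ k ∈ Finset.univ.biUnion ψ, userSet ψ k ∈ C) ∧
  ∀ T : {T : Finset N // T ∈ C}, v T = ∑ k ∈ T.1.biUnion ψ, γ k

/-- The equitable solution `τ(ψ, γ) ∈ ℝ^N`:
`τ_n(ψ,γ) = ∑_{k ∈ ψ(n)} γ(k)/|ψ⁻¹(k)|`. -/
noncomputable def tau {N K : Type} [Fintype N] (ψ : N → Finset K) (γ : K → ℝ)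
    (n : N) : ℝ :=
  ∑ k ∈ ψ n, γ k / ((userSet ψ k).card : ℝ)

/-- The Shapley value `φ_n(v)` of a game on all coalitions of `N`
(`v ∅` is understood to be `0`):
`φ_n(v) = ∑_{S ⊆ N∖{n}} (|S|!(|N|−1−|S|)!/|N|!)·(v(S∪{n}) − v(S))`. -/
noncomputable def shapley {N : Type} [Fintype N] [DecidableEq N]
    (v : Finset N → ℝ) (n : N) : ℝ :=
  ∑ S ∈ (Finset.univ.erase n).powerset,
    ((S.card.factorial : ℝ) * ((Fintype.card N - 1 - S.card).factorial : ℝ) /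
      ((Fintype.card N).factorial : ℝ)) * (v (insert n S) - v S)

/-- `C` is a semi-algebra: `N ∈ C`, and `N∖S ∈ C` for every `S ∈ C` with `S ≠ N`. -/
def IsSemiAlgebra {N : Type} [Fintype N] [DecidableEq N]
    (C : Finset (Finset N)) : Prop :=
  Finset.univ ∈ C ∧ ∀ S ∈ C, S ≠ Finset.univ → Finset.univ \ S ∈ C

/-- `C` is hierarchical: its elements can be arranged in a sequence
`S_1, …, S_l` such that for every `k = 2, …, l`, (i) `S_1` meets `S_k`, and
(ii) some `T ∈ C` misses `S_k` and meets each of `S_1, …, S_{k−1}`.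
(Indices are `0, …, l-1` here, with `S_1` the element of index `0`.) -/
def IsHierarchy {N : Type} [DecidableEq N] (C : Finset (Finset N)) : Prop :=
  ∃ (l : ℕ) (hl : 0 < l) (S : Fin l → Finset N),
    Function.Injective S ∧ (∀ k, S k ∈ C) ∧ (∀ T ∈ C, ∃ k, S k = T) ∧
    ∀ k : Fin l, 0 < (k : ℕ) →
      ((S ⟨0, hl⟩ ∩ S k).Nonempty ∧
       ∃ T ∈ C, T ∩ S k = ∅ ∧
         ∀ j : Fin l, (j : ℕ) < (k : ℕ) → (T ∩ S j).Nonempty)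

/-- Players `i` and `j` are symmetric in the game `v : C → ℝ`. -/
def SymmetricPlayers {N : Type} [DecidableEq N] (C : Finset (Finset N))
    (v : {T : Finset N // T ∈ C} → ℝ) (i j : N) : Prop :=
  ∀ T : Finset N, i ∉ T → j ∉ T →
    (insert i T ∈ C ↔ insert j T ∈ C) ∧
    ∀ (hi : insert i T ∈ C) (hj : insert j T ∈ C),
      v ⟨insert i T, hi⟩ = v ⟨insert j T, hj⟩

/-- Player `i` is a dummy in the game `v : C → ℝ`. -/
def DummyPlayer {N : Type} [DecidableEq N] (C : Finset (Finset N))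
    (v : {T : Finset N // T ∈ C} → ℝ) (i : N) : Prop :=
  (∀ h : ({i} : Finset N) ∈ C, v ⟨{i}, h⟩ = 0) ∧
  ∀ T : Finset N, T.Nonempty → i ∉ T →
    (insert i T ∈ C ↔ T ∈ C) ∧
    ∀ (hiT : insert i T ∈ C) (hT : T ∈ C), v ⟨insert i T, hiT⟩ = v ⟨T, hT⟩

/-! Write `S₀, …, S_{l-1}` for the hierarchical enumeration and `T_k` for the coalition that
misses `S_k` and meets all earlier `S_j`. If `∑ c_j w_{S_j} = 0`, evaluating at `S₀` gives
`∑ c_j = 0`, since `S₀` meets every `S_j`. Subtracting the evaluation at `T_k` leaves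
`∑ c_j (1 - w_{S_j}(T_k)) = 0`, in which only indices `j ≥ k` survive and the `j = k` term is `c_k`;
so downward induction kills every `c_k` with `k > 0`, and then `∑ c_j = 0` kills `c_0`.
Linear independence of `|C|` vectors in `ℝ^C` then gives a basis. -/

theorem linearIndependent_of_forall_exists_eq_zero_forall_lt_eq_one {ι X R : Type*}
    [LinearOrder ι] [Fintype ι] [Ring R] (f : ι → X → R) {k₀ : ι} (hk₀ : IsBot k₀) (x₀ : X)
    (h₀ : ∀ j, f j x₀ = 1) (hsep : ∀ k, k₀ < k → ∃ x, f k x = 0 ∧ ∀ j < k, f j x = 1) :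
    LinearIndependent R f := by
  rw [Fintype.linearIndependent_iff]
  intro c hc
  have hval : ∀ x, ∑ j, c j * f j x = 0 := fun x => by simpa using congrFun hc x
  have htotal : ∑ j, c j = 0 := by simpa [h₀] using hval x₀
  have hpos : ∀ k, k₀ < k → c k = 0 := by
    intro k
    induction k using WellFoundedGT.induction with
    | _ k ih =>
      intro hk
      obtain ⟨x, hxk, hxlt⟩ := hsep k hk
      calc c k = ∑ j, c j * (1 - f j x) := by
            rw [sum_eq_single k (fun j _ hjk => ?_) (by simp), hxk, sub_zero, mul_one]
            rcases hjk.lt_or_gt with hjk | hjk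
            · rw [hxlt j hjk, sub_self, mul_zero]
            · rw [ih j hjk (hk.trans hjk), zero_mul]
        _ = 0 := by simp [mul_sub, sum_sub_distrib, htotal, hval x]
  intro k
  rcases (hk₀ k).eq_or_lt with rfl | hk
  · rw [← htotal, sum_eq_single k₀ (fun j _ hj => hpos j ((hk₀ j).lt_of_ne' hj)) (by simp)]
  · exact hpos k hk

section MMGame

variable {N : Type} [DecidableEq N] {C : Finset (Finset N)}

lemma mmGame_apply_of_nonempty {S : Finset N} {T : {T : Finset N // T ∈ C}}
    (h : (S ∩ T.1).Nonempty) : mmGame C S T = 1 := if_pos h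

lemma mmGame_apply_of_inter_eq_empty {S : Finset N} {T : {T : Finset N // T ∈ C}}
    (h : S ∩ T.1 = ∅) : mmGame C S T = 0 := if_neg (by simp [h])

theorem fullSpan_of_linearIndependent
    (h : LinearIndependent ℝ (fun S : {S : Finset N // S ∈ C} => mmGame C S.1)) :
    FullSpan C :=
  ⟨h, h.span_eq_top_of_card_eq_finrank' (Module.finrank_fintype_fun_eq_card ℝ).symm⟩

theorem linearIndependent_mmGame_of_isHierarchy (hmem : ∀ S ∈ C, S.Nonempty)
    (hhier : IsHierarchy C) :
    LinearIndependent ℝ (fun S : {S : Finset N // S ∈ C} => mmGame C S.1) := by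
  obtain ⟨l, hl, S, hinj, hmemS, hsurj, hh⟩ := hhier
  let e : Fin l ≃ {S : Finset N // S ∈ C} := Equiv.ofBijective (fun k => ⟨S k, hmemS k⟩)
    ⟨fun a b hab => hinj (congrArg Subtype.val hab),
      fun T => (hsurj T.1 T.2).imp fun k hk => Subtype.ext hk⟩
  rw [← linearIndependent_equiv' e (g := fun k => mmGame C (S k)) rfl]
  refine linearIndependent_of_forall_exists_eq_zero_forall_lt_eq_one _
    (k₀ := ⟨0, hl⟩) (fun _ => Nat.zero_le _) ⟨S ⟨0, hl⟩, hmemS _⟩ (fun j => ?_) (fun k hk => ?_)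
  · refine mmGame_apply_of_nonempty ?_
    rcases Nat.eq_zero_or_pos j with hj | hj
    · obtain rfl : j = ⟨0, hl⟩ := Fin.ext hj
      simpa using hmem _ (hmemS _)
    · simpa [inter_comm] using (hh j hj).1
  · obtain ⟨-, T, hT, hTk, hTlt⟩ := hh k hk
    refine ⟨⟨T, hT⟩, ?_, fun j hj => ?_⟩
    · exact mmGame_apply_of_inter_eq_empty (by rwa [inter_comm])
    · exact mmGame_apply_of_nonempty (by rw [inter_comm]; exact hTlt j hj)

end MMGame

theorem hierarchical_imp_fullSpan_general {N : Type} [DecidableEq N]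
    (C : Finset (Finset N))
    (hmem : ∀ S ∈ C, S.Nonempty)
    (hhier : IsHierarchy C) : FullSpan C :=
  fullSpan_of_linearIndependent (linearIndependent_mmGame_of_isHierarchy hmem hhier)

/-- If `C` is hierarchical, then `C` has full span. -/
theorem hierarchical_imp_fullSpan {N : Type} [Fintype N] [DecidableEq N]
    [Nonempty N] (C : Finset (Finset N)) (hCne : C.Nonempty)
    (hmem : ∀ S ∈ C, S.Nonempty) (hcover : ∀ n : N, ∃ S ∈ C, n ∈ S)
    (hhier : IsHierarchy C) : FullSpan C :=
  hierarchical_imp_fullSpan_general C hmem hhier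
end

section
/- If C is a semi-algebra (i.e., N ∈ C and for every S ∈ C with S ≠ N also N∖S ∈ C), then C has full span, i.e., the family of MM-games {w_S}_{S∈C} is a basis of ℝ^C. -/
open Finset
open scoped Classical

/-! Order `C` by inclusion. The subset indicators `e_R(T) = [T ⊆ R]` are unitriangular with
respect to this order, so they span `ℝ^C`. In a semi-algebra every `e_R` is a combination of
MM-games: `w_N ≡ 1` because coalitions are nonempty, and `N ∖ R` misses `T` exactly when
`T ⊆ R`, so `e_R = w_N - w_{N∖R}` (and `e_N = w_N`). Hence the `|C|` MM-games span `ℝ^C`,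
and are therefore a basis. -/

theorem single_one_mem_span_indicator_Iic {R ι : Type*} [Ring R] [Fintype ι] [PartialOrder ι]
    (i : ι) : (Pi.single i 1 : ι → R) ∈
      Submodule.span R (Set.range fun i : ι => (Set.Iic i).indicator (1 : ι → R)) := by
  induction i using WellFoundedLT.induction with
  | _ i ih =>
  have hsplit : (Pi.single i 1 : ι → R) =
      (Set.Iic i).indicator 1 - ∑ j ∈ univ.filter (· < i), (Pi.single j 1 : ι → R) := by
    ext j
    by_cases hji : j ≤ i
    · rcases hji.lt_or_eq with h | rfl
      · simp [Pi.single_apply, h, h.le, Finset.sum_apply, h.ne]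
      · simp [Pi.single_apply, Finset.sum_apply]
    · have hne : j ≠ i := fun h => hji h.le
      have hnlt : ¬j < i := fun h => hji h.le
      simp [Pi.single_apply, Finset.sum_apply, hji, hne, hnlt]
  rw [hsplit]
  exact Submodule.sub_mem _ (Submodule.subset_span ⟨i, rfl⟩)
    (Submodule.sum_mem _ fun j hj => ih j (Finset.mem_filter.1 hj).2)

theorem span_range_indicator_Iic_eq_top (R ι : Type*) [Ring R] [Fintype ι] [PartialOrder ι] :
    Submodule.span R (Set.range fun i : ι => (Set.Iic i).indicator (1 : ι → R)) = ⊤ := by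
  rw [eq_top_iff, ← (Pi.basisFun R ι).span_eq, Submodule.span_le]
  rintro _ ⟨i, rfl⟩
  rw [Pi.basisFun_apply]
  exact single_one_mem_span_indicator_Iic i

section MMGame

variable {N : Type} [Fintype N] [DecidableEq N] {C : Finset (Finset N)}

theorem mmGame_univ (hmem : ∀ S ∈ C, S.Nonempty) : mmGame C univ = 1 := by
  ext T
  simp [mmGame, hmem T.1 T.2]

theorem mmGame_compl (R : Finset N) :
    mmGame C Rᶜ = 1 - {T : {T // T ∈ C} | T.1 ⊆ R}.indicator 1 := by
  ext T
  simp only [mmGame, Pi.sub_apply, Pi.one_apply, Set.indicator_apply, Set.mem_ofPred_eq,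
    ← not_disjoint_iff_nonempty_inter, disjoint_compl_left_iff]
  split_ifs <;> norm_num

theorem indicator_Iic_mem_span_mmGame (hmem : ∀ S ∈ C, S.Nonempty) (hsa : IsSemiAlgebra C)
    (R : {S // S ∈ C}) : (Set.Iic R).indicator 1 ∈
      Submodule.span ℝ (Set.range fun S : {S // S ∈ C} => mmGame C S.1) := by
  have hN : mmGame C univ ∈ Submodule.span ℝ (Set.range fun S : {S // S ∈ C} => mmGame C S.1) :=
    Submodule.subset_span ⟨⟨univ, hsa.1⟩, rfl⟩
  by_cases hR : R.1 = univ
  · have hIic : Set.Iic R = Set.univ :=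
      Set.eq_univ_of_forall fun T => show T.1 ⊆ R.1 from hR ▸ subset_univ _
    rwa [hIic, Set.indicator_univ, ← mmGame_univ hmem]
  · have hRc : R.1ᶜ ∈ C := by simpa [compl_eq_univ_sdiff] using hsa.2 R.1 R.2 hR
    have hdiff : (Set.Iic R).indicator 1 = mmGame C univ - mmGame C R.1ᶜ := by
      rw [mmGame_univ hmem, mmGame_compl, sub_sub_cancel]
      rfl
    rw [hdiff]
    exact Submodule.sub_mem _ hN (Submodule.subset_span ⟨⟨R.1ᶜ, hRc⟩, rfl⟩)

end MMGame

theorem semiAlgebra_imp_fullSpan_general {N : Type} [Fintype N] [DecidableEq N]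
    (C : Finset (Finset N))
    (hmem : ∀ S ∈ C, S.Nonempty)
    (hsa : IsSemiAlgebra C) : FullSpan C := by
  have hspan : ⊤ ≤ Submodule.span ℝ (Set.range fun S : {S // S ∈ C} => mmGame C S.1) := by
    rw [← span_range_indicator_Iic_eq_top ℝ {S // S ∈ C}, Submodule.span_le]
    rintro _ ⟨R, rfl⟩
    exact indicator_Iic_mem_span_mmGame hmem hsa R
  refine ⟨linearIndependent_of_top_le_span_of_card_eq_finrank hspan ?_, top_le_iff.1 hspan⟩
  exact (Module.finrank_fintype_fun_eq_card ℝ).symm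

/-- If `C` is a semi-algebra, then `C` has full span. -/
theorem semiAlgebra_imp_fullSpan {N : Type} [Fintype N] [DecidableEq N]
    [Nonempty N] (C : Finset (Finset N)) (hCne : C.Nonempty)
    (hmem : ∀ S ∈ C, S.Nonempty) (hcover : ∀ n : N, ∃ S ∈ C, n ∈ S)
    (hsa : IsSemiAlgebra C) : FullSpan C :=
  semiAlgebra_imp_fullSpan_general C hmem hsa
end

section
/- Assume C has full span. Then every game v : C → ℝ has a representation; explicitly, if v = Σ_{S∈C} c_S·w_S is the unique expansion of v in the MM-basis, then the assignment with facility set K = C, ψ(n) = {S ∈ C : n ∈ S} for each n ∈ N, and γ(S) = c_S for each S ∈ C, is a representation of v. -/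
open Finset
open scoped Classical

/-! Since `w_S(T) = 1` exactly when `S` meets `T`, the game `∑ c_S • w_S` takes at `T` the
value `∑ c_S` over the coalitions `S` meeting `T`, and these are precisely the facilities
`ψ(T)` of the assignment `ψ(n) = {S ∈ C : n ∈ S}`, whose user-sets are the coalitions
themselves. Full span supplies such an expansion for every game. -/

section Canonical

variable {N : Type} [DecidableEq N] (C : Finset (Finset N))

noncomputable def coalitionsContaining (n : N) : Finset {S : Finset N // S ∈ C} :=
  Finset.univ.filter fun S => n ∈ S.1

theorem userSet_coalitionsContaining [Fintype N] (S : {S : Finset N // S ∈ C}) :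
    userSet (coalitionsContaining C) S = S.1 := by
  ext n
  simp [userSet, coalitionsContaining]

theorem sum_smul_mmGame_apply (d : {S : Finset N // S ∈ C} → ℝ)
    (T : {T : Finset N // T ∈ C}) :
    (∑ S, d S • mmGame C S.1) T =
      ∑ S ∈ Finset.univ.filter fun S : {S : Finset N // S ∈ C} => (S.1 ∩ T.1).Nonempty,
        d S := by
  simp only [Finset.sum_apply, Pi.smul_apply, mmGame, smul_eq_mul, mul_ite, mul_one,
    mul_zero, Finset.sum_filter]

theorem isRep_sum_smul_mmGame [Fintype N] (d : {S : Finset N // S ∈ C} → ℝ) :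
    IsRep C (∑ S, d S • mmGame C S.1) (coalitionsContaining C) d := by
  refine ⟨fun S _ => ?_, fun T => ?_⟩
  · rw [userSet_coalitionsContaining]
    exact S.2
  · rw [sum_smul_mmGame_apply]
    exact Finset.sum_congr (Finset.ext fun S => by
      simp [coalitionsContaining, Finset.Nonempty, and_comm]) fun _ _ => rfl

theorem exists_eq_sum_smul_mmGame
    (hspan : Submodule.span ℝ (Set.range fun S : {S : Finset N // S ∈ C} => mmGame C S.1) = ⊤)
    (u : {T : Finset N // T ∈ C} → ℝ) :
    ∃ d : {S : Finset N // S ∈ C} → ℝ, u = ∑ S, d S • mmGame C S.1 := by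
  have hu : u ∈ Submodule.span ℝ (Set.range fun S : {S : Finset N // S ∈ C} => mmGame C S.1) :=
    hspan ▸ Submodule.mem_top
  obtain ⟨d, hd⟩ := (Submodule.mem_span_range_iff_exists_fun ℝ).mp hu
  exact ⟨d, hd.symm⟩

end Canonical

theorem canonical_representation_general {N : Type} [Fintype N] [DecidableEq N]
    (C : Finset (Finset N))
    (hfs : FullSpan C) (v : {T : Finset N // T ∈ C} → ℝ)
    (c : {S : Finset N // S ∈ C} → ℝ)
    (hv : v = ∑ S : {S : Finset N // S ∈ C}, c S • mmGame C S.1) :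
    (∀ u : {T : Finset N // T ∈ C} → ℝ,
      ∃ (K : Type) (ψ : N → Finset K) (γ : K → ℝ), IsRep C u ψ γ) ∧
    IsRep C v
      (fun n => Finset.univ.filter fun S : {S : Finset N // S ∈ C} => n ∈ S.1)
      c := by
  refine ⟨fun u => ?_, hv ▸ isRep_sum_smul_mmGame C c⟩
  obtain ⟨d, rfl⟩ := exists_eq_sum_smul_mmGame C hfs.2 u
  exact ⟨_, _, _, isRep_sum_smul_mmGame C d⟩

/-- If `C` has full span then every game `v : C → ℝ` has a
representation; explicitly, if `v = Σ_{S∈C} c_S • w_S` is the expansion of `v`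
in the MM-basis, then the assignment with facility set `K = C`,
`ψ(n) = {S ∈ C : n ∈ S}` and `γ(S) = c_S` is a representation of `v`. -/
theorem canonical_representation {N : Type} [Fintype N] [DecidableEq N]
    [Nonempty N] (C : Finset (Finset N)) (hCne : C.Nonempty)
    (hmem : ∀ S ∈ C, S.Nonempty) (hcover : ∀ n : N, ∃ S ∈ C, n ∈ S)
    (hfs : FullSpan C) (v : {T : Finset N // T ∈ C} → ℝ)
    (c : {S : Finset N // S ∈ C} → ℝ)
    (hv : v = ∑ S : {S : Finset N // S ∈ C}, c S • mmGame C S.1) :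
    (∀ u : {T : Finset N // T ∈ C} → ℝ,
      ∃ (K : Type) (ψ : N → Finset K) (γ : K → ℝ), IsRep C u ψ γ) ∧
    IsRep C v
      (fun n => Finset.univ.filter fun S : {S : Finset N // S ∈ C} => n ∈ S.1)
      c :=
  canonical_representation_general C hfs v c hv
end

section
/- Assume C has full span and let v = Σ_{S∈C} c_S·w_S be the unique expansion of v : C → ℝ in the MM-basis. Then for every representation (ψ, γ) of v with facility set K and every S ∈ C, the total cost of the facilities whose full user-set equals S is c_S, i.e., Σ_{k ∈ K : ψ⁻¹(k) = S} γ(k) = c_S. -/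
open Finset
open scoped Classical

/-!
A facility `k` serves the coalition `T` exactly when its user-set `ψ⁻¹(k)` meets `T`, so
`v(T) = Σ_k γ(k) w_{ψ⁻¹(k)}(T)`. Grouping the facilities by their user-set, which lies in `C`,
writes `v` as `Σ_{S ∈ C} (Σ_{ψ⁻¹(k) = S} γ(k)) w_S`; by linear independence of the MM-games
these coefficients are the `c_S`.
-/

section Facilities

variable {N K : Type} [Fintype N]

theorem mem_userSet {ψ : N → Finset K} {k : K} {n : N} : n ∈ userSet ψ k ↔ k ∈ ψ n := by
  simp [userSet]

variable [DecidableEq N]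

noncomputable def facilityCost (ψ : N → Finset K) (γ : K → ℝ) (S : Finset N) : ℝ :=
  ∑ k ∈ (univ.biUnion ψ).filter (fun k => userSet ψ k = S), γ k

theorem biUnion_eq_filter_userSet_inter_nonempty (ψ : N → Finset K) (T : Finset N) :
    T.biUnion ψ = (univ.biUnion ψ).filter (fun k => (userSet ψ k ∩ T).Nonempty) := by
  ext k
  simp only [mem_biUnion, mem_filter, mem_univ, true_and, Finset.Nonempty, mem_inter,
    mem_userSet]
  constructor
  · rintro ⟨n, hnT, hkn⟩
    exact ⟨⟨n, hkn⟩, n, hkn, hnT⟩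
  · rintro ⟨-, n, hkn, hnT⟩
    exact ⟨n, hnT, hkn⟩

theorem sum_biUnion_eq_sum_facilityCost_mul_mmGame {C : Finset (Finset N)}
    {ψ : N → Finset K} (hC : ∀ k ∈ univ.biUnion ψ, userSet ψ k ∈ C) (γ : K → ℝ)
    (T : {T : Finset N // T ∈ C}) :
    ∑ k ∈ T.1.biUnion ψ, γ k =
      ∑ S : {S : Finset N // S ∈ C}, facilityCost ψ γ S.1 * mmGame C S.1 T := by
  rw [biUnion_eq_filter_userSet_inter_nonempty, sum_filter,
    ← sum_fiberwise_of_maps_to hC, ← sum_coe_sort C]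
  refine sum_congr rfl fun S _ => ?_
  rw [facilityCost, sum_mul]
  refine sum_congr rfl fun k hk => ?_
  rw [(mem_filter.mp hk).2, mmGame]
  split_ifs <;> simp

theorem IsRep.eq_sum_facilityCost_smul_mmGame {C : Finset (Finset N)}
    {v : {T : Finset N // T ∈ C} → ℝ} {ψ : N → Finset K} {γ : K → ℝ}
    (hrep : IsRep C v ψ γ) :
    v = ∑ S : {S : Finset N // S ∈ C}, facilityCost ψ γ S.1 • mmGame C S.1 := by
  funext T
  simp only [hrep.2 T, Finset.sum_apply, Pi.smul_apply, smul_eq_mul]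
  exact sum_biUnion_eq_sum_facilityCost_mul_mmGame hrep.1 γ T

end Facilities

theorem rep_coefficients_general {N : Type} [Fintype N] [DecidableEq N]
    (C : Finset (Finset N))
    (hfs : FullSpan C) (v : {T : Finset N // T ∈ C} → ℝ)
    (c : {S : Finset N // S ∈ C} → ℝ)
    (hv : v = ∑ S : {S : Finset N // S ∈ C}, c S • mmGame C S.1)
    {K : Type} (ψ : N → Finset K) (γ : K → ℝ) (hrep : IsRep C v ψ γ) :
    ∀ S : {S : Finset N // S ∈ C},
      ∑ k ∈ (Finset.univ.biUnion ψ).filter (fun k => userSet ψ k = S.1), γ k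
        = c S :=
  Fintype.linearIndependent_iffₛ.mp hfs.1 _ _
    (hrep.eq_sum_facilityCost_smul_mmGame.symm.trans hv)

/-- If `C` has full span and `v = Σ_{S∈C} c_S • w_S` is the
expansion of `v` in the MM-basis, then in every representation `(ψ, γ)` of `v`
the total cost of the facilities whose full user-set equals `S` is `c_S`. -/
theorem rep_coefficients {N : Type} [Fintype N] [DecidableEq N] [Nonempty N]
    (C : Finset (Finset N)) (hCne : C.Nonempty)
    (hmem : ∀ S ∈ C, S.Nonempty) (hcover : ∀ n : N, ∃ S ∈ C, n ∈ S)
    (hfs : FullSpan C) (v : {T : Finset N // T ∈ C} → ℝ)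
    (c : {S : Finset N // S ∈ C} → ℝ)
    (hv : v = ∑ S : {S : Finset N // S ∈ C}, c S • mmGame C S.1)
    {K : Type} (ψ : N → Finset K) (γ : K → ℝ) (hrep : IsRep C v ψ γ) :
    ∀ S : {S : Finset N // S ∈ C},
      ∑ k ∈ (Finset.univ.biUnion ψ).filter (fun k => userSet ψ k = S.1), γ k
        = c S :=
  rep_coefficients_general C hfs v c hv ψ γ hrep
end

section
/- Assume C has full span and let v = Σ_{S∈C} c_S·w_S be the unique expansion of v : C → ℝ in the MM-basis. Then every representation of v has at least |{S ∈ C : c_S ≠ 0}| facilities, and there exists a representation of v with exactly |{S ∈ C : c_S ≠ 0}| facilities. -/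
open Finset
open scoped Classical

/-! Any assignment whose user-sets lie in `C` represents the game `∑_S d_S • w_S`, where
`d_S` is the total weight of the facilities with user-set exactly `S`: a coalition `T` pays for
facility `k` precisely when `T` meets `ψ⁻¹(k)`. By uniqueness of MM-coordinates `d = c`, so every
coalition with `c_S ≠ 0` is the user-set of some facility, which gives the lower bound.
Conversely, one facility per such coalition, used by its members and weighted `c_S`, is a
representation. -/

variable {N : Type} [DecidableEq N] {C : Finset (Finset N)}

theorem mmGame_empty : mmGame C ∅ = 0 := by
  ext T
  simp [mmGame]

theorem nonempty_of_linearIndependent_mmGame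
    (hli : LinearIndependent ℝ fun S : C => mmGame C S) (S : C) : (S : Finset N).Nonempty := by
  rw [Finset.nonempty_iff_ne_empty]
  intro hS
  exact hli.ne_zero S (by rw [hS, mmGame_empty])

section Assignment

variable [Fintype N] {K : Type} (ψ : N → Finset K) (γ : K → ℝ)

noncomputable def userSetWeight (S : Finset N) : ℝ :=
  ∑ k ∈ (univ.biUnion ψ).filter (fun k => userSet ψ k = S), γ k

theorem biUnion_eq_filter_userSet_meets (T : Finset N) :
    T.biUnion ψ = (univ.biUnion ψ).filter fun k => (userSet ψ k ∩ T).Nonempty := by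
  ext k
  simp only [mem_biUnion, mem_filter, userSet, Finset.Nonempty, mem_inter, mem_univ, true_and]
  constructor
  · rintro ⟨n, hn, hk⟩
    exact ⟨⟨n, hk⟩, n, hk, hn⟩
  · rintro ⟨-, n, hk, hn⟩
    exact ⟨n, hn, hk⟩

theorem sum_biUnion_eq_sum_userSetWeight_smul_mmGame
    (hC : ∀ k ∈ univ.biUnion ψ, userSet ψ k ∈ C) (T : C) :
    ∑ k ∈ (T : Finset N).biUnion ψ, γ k = (∑ S : C, userSetWeight ψ γ S • mmGame C S) T := by
  rw [biUnion_eq_filter_userSet_meets, sum_filter, ← sum_fiberwise_of_maps_to hC, Finset.sum_apply,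
    ← sum_coe_sort C]
  refine sum_congr rfl fun S _ => ?_
  rw [Pi.smul_apply, smul_eq_mul, userSetWeight, sum_mul]
  refine sum_congr rfl fun k hk => ?_
  rw [(mem_filter.mp hk).2, mmGame, mul_ite, mul_one, mul_zero]

theorem IsRep.coeff_eq_userSetWeight {v : C → ℝ} (hrep : IsRep C v ψ γ)
    (hli : LinearIndependent ℝ fun S : C => mmGame C S) {c : C → ℝ}
    (hv : v = ∑ S : C, c S • mmGame C S) (S : C) : c S = userSetWeight ψ γ S := by
  refine Fintype.linearIndependent_iffₛ.mp hli c (fun S => userSetWeight ψ γ S) ?_ S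
  ext T
  rw [← hv, hrep.2 T, sum_biUnion_eq_sum_userSetWeight_smul_mmGame ψ γ hrep.1]

theorem IsRep.card_support_le {v : C → ℝ} (hrep : IsRep C v ψ γ)
    (hli : LinearIndependent ℝ fun S : C => mmGame C S) {c : C → ℝ}
    (hv : v = ∑ S : C, c S • mmGame C S) :
    (univ.filter fun S : C => c S ≠ 0).card ≤ (univ.biUnion ψ).card := by
  rw [← card_map (Function.Embedding.subtype _)]
  refine card_le_card_of_surjOn (userSet ψ) ?_
  intro _ hmapped
  obtain ⟨S, hS, rfl⟩ := mem_map.mp hmapped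
  have hweight : userSetWeight ψ γ S ≠ 0 := by
    rw [← hrep.coeff_eq_userSetWeight ψ γ hli hv]
    exact (mem_filter.mp hS).2
  obtain ⟨k, hk⟩ : ((univ.biUnion ψ).filter fun k => userSet ψ k = S).Nonempty :=
    nonempty_of_sum_ne_zero hweight
  exact ⟨k, (mem_filter.mp hk).1, (mem_filter.mp hk).2⟩

end Assignment

section Support

variable (c : C → ℝ)

noncomputable def supportAssignment (n : N) : Finset C :=
  univ.filter fun S => c S ≠ 0 ∧ n ∈ (S : Finset N)

-- The instance is implicit so that these lemmas also rewrite the `biUnion`s inside `IsRep`,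
-- which were elaborated with the classical instance.
theorem biUnion_supportAssignment {_ : DecidableEq C} (T : Finset N) :
    T.biUnion (supportAssignment c) =
      univ.filter fun S : C => c S ≠ 0 ∧ ((S : Finset N) ∩ T).Nonempty := by
  ext S
  simp only [mem_biUnion, supportAssignment, mem_filter, mem_univ, true_and, Finset.Nonempty,
    mem_inter]
  tauto

variable [Fintype N]

theorem userSet_supportAssignment {S : C} (hS : c S ≠ 0) :
    userSet (supportAssignment c) S = S := by
  ext n
  simp [userSet, supportAssignment, hS]

theorem biUnion_univ_supportAssignment {_ : DecidableEq C}
    (hne : ∀ S : C, (S : Finset N).Nonempty) :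
    univ.biUnion (supportAssignment c) = univ.filter fun S : C => c S ≠ 0 := by
  rw [biUnion_supportAssignment]
  refine filter_congr fun S _ => and_iff_left_of_imp fun _ => ?_
  simpa only [inter_univ] using hne S

theorem isRep_supportAssignment (hne : ∀ S : C, (S : Finset N).Nonempty) :
    IsRep C (∑ S : C, c S • mmGame C S) (supportAssignment c) c := by
  refine ⟨fun S hS => ?_, fun T => ?_⟩
  · rw [biUnion_univ_supportAssignment c hne, mem_filter] at hS
    rw [userSet_supportAssignment c hS.2]
    exact S.2
  · rw [biUnion_supportAssignment, sum_filter, Finset.sum_apply]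
    refine sum_congr rfl fun S _ => ?_
    by_cases hc : c S = 0 <;> simp [mmGame, hc]

end Support

theorem minimal_representation_general {N : Type} [Fintype N] [DecidableEq N]
    (C : Finset (Finset N))
    (hfs : FullSpan C) (v : {T : Finset N // T ∈ C} → ℝ)
    (c : {S : Finset N // S ∈ C} → ℝ)
    (hv : v = ∑ S : {S : Finset N // S ∈ C}, c S • mmGame C S.1) :
    (∀ (K : Type) (ψ : N → Finset K) (γ : K → ℝ), IsRep C v ψ γ →
      (Finset.univ.filter fun S : {S : Finset N // S ∈ C} => c S ≠ 0).card ≤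
        (Finset.univ.biUnion ψ).card) ∧
    (∃ (K : Type) (ψ : N → Finset K) (γ : K → ℝ), IsRep C v ψ γ ∧
      (Finset.univ.biUnion ψ).card =
        (Finset.univ.filter fun S : {S : Finset N // S ∈ C} => c S ≠ 0).card) := by
  have hne := nonempty_of_linearIndependent_mmGame hfs.1
  refine ⟨fun K ψ γ hrep => hrep.card_support_le ψ γ hfs.1 hv, C, supportAssignment c, c, ?_, ?_⟩
  · rw [hv]
    exact isRep_supportAssignment c hne
  · rw [biUnion_univ_supportAssignment c hne]

/-- If `C` has full span and `v = Σ_{S∈C} c_S • w_S` is the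
expansion of `v` in the MM-basis, then every representation of `v` has at
least `|{S ∈ C : c_S ≠ 0}|` facilities, and some representation of `v` has
exactly `|{S ∈ C : c_S ≠ 0}|` facilities. -/
theorem minimal_representation {N : Type} [Fintype N] [DecidableEq N]
    [Nonempty N] (C : Finset (Finset N)) (hCne : C.Nonempty)
    (hmem : ∀ S ∈ C, S.Nonempty) (hcover : ∀ n : N, ∃ S ∈ C, n ∈ S)
    (hfs : FullSpan C) (v : {T : Finset N // T ∈ C} → ℝ)
    (c : {S : Finset N // S ∈ C} → ℝ)
    (hv : v = ∑ S : {S : Finset N // S ∈ C}, c S • mmGame C S.1) :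
    (∀ (K : Type) (ψ : N → Finset K) (γ : K → ℝ), IsRep C v ψ γ →
      (Finset.univ.filter fun S : {S : Finset N // S ∈ C} => c S ≠ 0).card ≤
        (Finset.univ.biUnion ψ).card) ∧
    (∃ (K : Type) (ψ : N → Finset K) (γ : K → ℝ), IsRep C v ψ γ ∧
      (Finset.univ.biUnion ψ).card =
        (Finset.univ.filter fun S : {S : Finset N // S ∈ C} => c S ≠ 0).card) :=
  minimal_representation_general C hfs v c hv
end

section
/- Let S be a nonempty subset of the finite set N and c ∈ ℝ, and let c·w̃_S : 𝒩 → ℝ be the game given by (c·w̃_S)(T) = c if S ∩ T ≠ ∅ and 0 if S ∩ T = ∅. Then the Shapley value of c·w̃_S gives φ_n(c·w̃_S) = c/|S| for every n ∈ S and φ_n(c·w̃_S) = 0 for every n ∈ N∖S. -/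
open Finset
open scoped Classical

/-! The marginal contribution of a player `n ∈ S` to a coalition `T` is `c` exactly when `T`
misses `S`, so `φ_n` is `c` times the total Shapley weight of the coalitions `T ⊆ N ∖ S`: the
probability that `n` precedes the other players of `S` in a uniformly random order, i.e.
`1 / |S|`. Players outside `S` are null. Grouping by `j = |T|`, with `m = |N ∖ S|` and
`|S| = k + 1`, the weight sum is `∑ⱼ C(m, j) j! (m + k - j)! / (m + k + 1)!`, and
`C(m, j) j! (m + k - j)! = m! k! C(m + k - j, k)` turns it into the hockey-stick identity. -/

open Nat

theorem Nat.choose_mul_factorial_mul_factorial_add {m j : ℕ} (k : ℕ) (hj : j ≤ m) :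
    m.choose j * j ! * (m + k - j)! = m ! * k ! * (m + k - j).choose k := by
  have hm := choose_mul_factorial_mul_factorial hj
  have hmk := choose_mul_factorial_mul_factorial (n := m + k - j) (k := k) (by omega)
  rw [show m + k - j - k = m - j by omega] at hmk
  apply Nat.eq_of_mul_eq_mul_right (m - j).factorial_pos
  calc m.choose j * j ! * (m + k - j)! * (m - j)!
      = m.choose j * j ! * (m - j)! * (m + k - j)! := by ring
    _ = m ! * ((m + k - j).choose k * k ! * (m - j)!) := by rw [hm, hmk]
    _ = m ! * k ! * (m + k - j).choose k * (m - j)! := by ring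

theorem Nat.sum_range_choose_mul_factorial_mul_factorial (m k : ℕ) :
    ∑ j ∈ range (m + 1), m.choose j * j ! * (m + k - j)! =
      m ! * k ! * (m + k + 1).choose (k + 1) := by
  rw [sum_congr rfl fun j hj =>
      choose_mul_factorial_mul_factorial_add k (Nat.lt_succ_iff.mp (mem_range.mp hj)),
    ← mul_sum, ← sum_range_add_choose, ← sum_range_reflect]
  refine congrArg _ (sum_congr rfl fun j hj => ?_)
  have := mem_range.mp hj
  congr 1
  omega

theorem sum_range_choose_mul_factorial_mul_factorial_div {K : Type*} [Field K] [CharZero K]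
    (m k : ℕ) :
    ∑ j ∈ range (m + 1),
        (m.choose j : K) * ((j ! : K) * ((m + k - j)! : K) / ((m + k + 1)! : K)) =
      1 / ((k + 1 : ℕ) : K) := by
  have hfact := add_choose_mul_factorial_mul_factorial m (k + 1)
  rw [← add_assoc] at hfact
  have hsum : (∑ j ∈ range (m + 1), m.choose j * j ! * (m + k - j)!) * (k + 1) =
      1 * ((m + k + 1).choose (k + 1) * m ! * ((k + 1) * k !)) := by
    rw [sum_range_choose_mul_factorial_mul_factorial]
    ring
  simp_rw [← mul_div_assoc, ← mul_assoc, ← sum_div]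
  rw [div_eq_div_iff (by exact_mod_cast (m + k + 1).factorial_ne_zero)
    (by exact_mod_cast k.succ_ne_zero), ← hfact, factorial_succ]
  exact_mod_cast hsum

theorem Finset.sum_powerset_factorial_mul_factorial_div {N K : Type*} [Fintype N] [Field K]
    [CharZero K] (A : Finset N) (hA : #A < Fintype.card N) :
    ∑ T ∈ A.powerset,
        ((#T)! : K) * ((Fintype.card N - 1 - #T)! : K) / ((Fintype.card N)! : K) =
      1 / ((Fintype.card N - #A : ℕ) : K) := by
  obtain ⟨k, hk⟩ : ∃ k, Fintype.card N = #A + k + 1 := ⟨Fintype.card N - #A - 1, by omega⟩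
  rw [sum_powerset_apply_card
      (fun t => (t ! : K) * ((Fintype.card N - 1 - t)! : K) / ((Fintype.card N)! : K)), hk,
    show #A + k + 1 - #A = k + 1 by omega, ← sum_range_choose_mul_factorial_mul_factorial_div #A]
  simp only [nsmul_eq_mul, Nat.add_sub_cancel]

theorem shapley_eq_zero_of_null {N : Type} [Fintype N] [DecidableEq N] {v : Finset N → ℝ}
    {n : N} (hv : ∀ T, v (insert n T) = v T) : shapley v n = 0 :=
  sum_eq_zero fun T _ => by rw [hv, sub_self, mul_zero]

theorem shapley_meetGame_of_mem {N : Type} [Fintype N] [DecidableEq N] {S : Finset N} {n : N}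
    (hn : n ∈ S) (c : ℝ) :
    shapley (fun T : Finset N => if (S ∩ T).Nonempty then c else 0) n = c / (#S : ℝ) := by
  have hmarginal : ∀ T : Finset N, ((if (S ∩ insert n T).Nonempty then c else 0) -
      if (S ∩ T).Nonempty then c else 0) = if Disjoint S T then c else 0 := by
    intro T
    have hmeet : (S ∩ insert n T).Nonempty := ⟨n, mem_inter.2 ⟨hn, mem_insert_self n T⟩⟩
    rw [if_pos hmeet]
    simp only [← not_disjoint_iff_nonempty_inter, ite_not]
    split_ifs <;> ring
  have hmissing : (univ.erase n).powerset.filter (Disjoint S) = (univ \ S).powerset := by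
    ext T
    simp only [mem_filter, mem_powerset, subset_sdiff, subset_erase, subset_univ, true_and,
      disjoint_comm (a := T)]
    exact and_iff_right_of_imp fun hST => disjoint_left.mp hST hn
  unfold shapley
  simp_rw [hmarginal, mul_ite, mul_zero]
  rw [← sum_filter, hmissing, ← sum_mul,
    sum_powerset_factorial_mul_factorial_div _ (card_lt_univ_of_notMem (x := n) (by simp [hn])),
    card_univ_sdiff, Nat.sub_sub_self (card_le_univ S), one_div_mul_eq_div]

theorem shapley_of_mmGame_general {N : Type} [Fintype N] [DecidableEq N]
    (S : Finset N) (c : ℝ) :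
    (∀ n ∈ S,
      shapley (fun T : Finset N => if (S ∩ T).Nonempty then c else 0) n
        = c / (S.card : ℝ)) ∧
    (∀ n ∈ Finset.univ \ S,
      shapley (fun T : Finset N => if (S ∩ T).Nonempty then c else 0) n
        = 0) :=
  ⟨fun _ hn => shapley_meetGame_of_mem hn c, fun _ hn => shapley_eq_zero_of_null fun T => by
    rw [inter_insert_of_notMem (mem_sdiff.mp hn).2]⟩

/-- For a nonempty `S ⊆ N` and `c ∈ ℝ`, the Shapley value of the
game `c·w̃_S` (worth `c` to coalitions meeting `S` and `0` to coalitions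
missing `S`) gives `c/|S|` to every `n ∈ S` and `0` to every `n ∈ N∖S`. -/
theorem shapley_of_mmGame {N : Type} [Fintype N] [DecidableEq N] [Nonempty N]
    (S : Finset N) (hS : S.Nonempty) (c : ℝ) :
    (∀ n ∈ S,
      shapley (fun T : Finset N => if (S ∩ T).Nonempty then c else 0) n
        = c / (S.card : ℝ)) ∧
    (∀ n ∈ Finset.univ \ S,
      shapley (fun T : Finset N => if (S ∩ T).Nonempty then c else 0) n
        = 0) :=
  shapley_of_mmGame_general S c
end

section
/- A game v : C → ℝ has a representation if and only if v lies in Sp(C) = Span{w_S : S ∈ C} ⊆ ℝ^C. -/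
open Finset
open scoped Classical

/-! A coalition `T` uses facility `k` exactly when `T` meets the user-set `ψ⁻¹(k)`, so a
representation `(ψ, γ)` gives `v = ∑_k γ(k) • w_{ψ⁻¹(k)}`, a combination of MM-games of
coalitions in `C`. Conversely, `v = ∑_{S ∈ C} c_S • w_S` is represented by taking the
coalitions of `C` themselves as facilities, each used by its members, with cost `c_S`. -/

theorem mem_biUnion_iff_userSet_inter_nonempty {N K : Type} [Fintype N] [DecidableEq N]
    (ψ : N → Finset K) (T : Finset N) (k : K) :
    k ∈ T.biUnion ψ ↔ (userSet ψ k ∩ T).Nonempty := by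
  simp [userSet, Finset.Nonempty, and_comm]

theorem sum_biUnion_eq_sum_smul_mmGame {N K : Type} [Fintype N] [DecidableEq N]
    (C : Finset (Finset N)) (ψ : N → Finset K) (γ : K → ℝ) {s : Finset K}
    (hs : univ.biUnion ψ ⊆ s) (T : {T : Finset N // T ∈ C}) :
    ∑ k ∈ T.1.biUnion ψ, γ k = (∑ k ∈ s, γ k • mmGame C (userSet ψ k)) T := by
  simp only [Finset.sum_apply, Pi.smul_apply, smul_eq_mul, mmGame, mul_ite, mul_one,
    mul_zero]
  rw [← sum_filter]
  congr 1
  ext k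
  rw [mem_filter, ← mem_biUnion_iff_userSet_inter_nonempty]
  exact ⟨fun hk => ⟨hs (biUnion_subset_biUnion_of_subset_left ψ (subset_univ _) hk), hk⟩,
    And.right⟩

theorem IsRep.mem_span_mmGame {N K : Type} [Fintype N] [DecidableEq N]
    {C : Finset (Finset N)} {v : {T : Finset N // T ∈ C} → ℝ} {ψ : N → Finset K}
    {γ : K → ℝ} (h : IsRep C v ψ γ) :
    v ∈ Submodule.span ℝ (Set.range fun S : {S : Finset N // S ∈ C} => mmGame C S.1) := by
  have hv : v = ∑ k ∈ univ.biUnion ψ, γ k • mmGame C (userSet ψ k) :=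
    funext fun T => (h.2 T).trans (sum_biUnion_eq_sum_smul_mmGame C ψ γ subset_rfl T)
  rw [hv]
  exact Submodule.sum_mem _ fun k hk =>
    Submodule.smul_mem _ _ (Submodule.subset_span ⟨⟨userSet ψ k, h.1 k hk⟩, rfl⟩)

noncomputable def coalitionAssignment {N : Type} (C : Finset (Finset N)) (n : N) :
    Finset {S : Finset N // S ∈ C} :=
  univ.filter fun S => n ∈ S.1

theorem userSet_coalitionAssignment {N : Type} [Fintype N] (C : Finset (Finset N))
    (S : {S : Finset N // S ∈ C}) : userSet (coalitionAssignment C) S = S.1 := by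
  ext n
  simp [userSet, coalitionAssignment]

theorem isRep_coalitionAssignment {N : Type} [Fintype N] [DecidableEq N]
    {C : Finset (Finset N)} {v : {T : Finset N // T ∈ C} → ℝ}
    {c : {S : Finset N // S ∈ C} → ℝ} (hc : ∑ S, c S • mmGame C S.1 = v) :
    IsRep C v (coalitionAssignment C) c := by
  refine ⟨fun S _ => userSet_coalitionAssignment C S ▸ S.2, fun T => ?_⟩
  rw [sum_biUnion_eq_sum_smul_mmGame C _ c (subset_univ _) T, ← hc]
  simp only [userSet_coalitionAssignment]

theorem hasRep_iff_mem_span_general {N : Type} [Fintype N] [DecidableEq N]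
    (C : Finset (Finset N))
    (v : {T : Finset N // T ∈ C} → ℝ) :
    (∃ (K : Type) (ψ : N → Finset K) (γ : K → ℝ), IsRep C v ψ γ) ↔
      v ∈ Submodule.span ℝ
        (Set.range fun S : {S : Finset N // S ∈ C} => mmGame C S.1) := by
  refine ⟨fun ⟨_, _, _, h⟩ => h.mem_span_mmGame, fun hv => ?_⟩
  obtain ⟨c, hc⟩ := Submodule.mem_span_range_iff_exists_fun ℝ |>.mp hv
  exact ⟨_, _, _, isRep_coalitionAssignment hc⟩

/-- A game `v : C → ℝ` has a representation if and only if `v`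
lies in `Sp(C) = Span{w_S : S ∈ C} ⊆ ℝ^C`. -/
theorem hasRep_iff_mem_span {N : Type} [Fintype N] [DecidableEq N] [Nonempty N]
    (C : Finset (Finset N)) (hCne : C.Nonempty)
    (hmem : ∀ S ∈ C, S.Nonempty) (hcover : ∀ n : N, ∃ S ∈ C, n ∈ S)
    (v : {T : Finset N // T ∈ C} → ℝ) :
    (∃ (K : Type) (ψ : N → Finset K) (γ : K → ℝ), IsRep C v ψ γ) ↔
      v ∈ Submodule.span ℝ
        (Set.range fun S : {S : Finset N // S ∈ C} => mmGame C S.1) :=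
  hasRep_iff_mem_span_general C v
end

section
/- Assume C has full span, let v = Σ_{S∈C} c_S·w_S be the unique expansion of v : C → ℝ in the MM-basis, and suppose players i and j are symmetric in v. If A ∈ C with i ∈ A and j ∉ A, then B = (A∖{i})∪{j} ∈ C and c_A = c_B. -/
open Finset
open scoped Classical

/-! The transposition `π = (i j)` maps `C` onto itself and fixes `v`, because `i` and `j` are
symmetric. Relabelling by `π` turns `w_S` into `w_{π S} ∘ π`, so `∑ c_{π S} w_S` is again an
expansion of `v`; uniqueness of the expansion in the basis `{w_S}` gives `c_{π S} = c_S`, and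
`π A = (A ∖ {i}) ∪ {j}`. -/

open Equiv

namespace Finset

variable {N : Type} [DecidableEq N]

theorem map_swap_eq_self_of_mem_iff {i j : N} {S : Finset N} (h : i ∈ S ↔ j ∈ S) :
    S.map (swap i j).toEmbedding = S := by
  ext x
  simp only [mem_map_equiv, symm_swap, swap_apply_def]
  split_ifs with hi hj <;> simp_all

theorem map_swap_insert {i j : N} {R : Finset N} (hi : i ∉ R) (hj : j ∉ R) :
    (insert i R).map (swap i j).toEmbedding = insert j R := by
  rw [map_insert, Equiv.toEmbedding_apply, swap_apply_left,
    map_swap_eq_self_of_mem_iff (iff_of_false hi hj)]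

theorem map_swap_cases (i j : N) (S : Finset N) :
    S.map (swap i j).toEmbedding = S ∨ ∃ R, i ∉ R ∧ j ∉ R ∧
      (S = insert i R ∧ S.map (swap i j).toEmbedding = insert j R ∨
        S = insert j R ∧ S.map (swap i j).toEmbedding = insert i R) := by
  by_cases h : i ∈ S ↔ j ∈ S
  · exact .inl (map_swap_eq_self_of_mem_iff h)
  right
  by_cases hi : i ∈ S
  · obtain ⟨R, hiR, rfl⟩ : ∃ R, i ∉ R ∧ S = insert i R :=
      ⟨S.erase i, notMem_erase i S, (insert_erase hi).symm⟩
    have hjR : j ∉ R := by simp_all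
    exact ⟨R, hiR, hjR, .inl ⟨rfl, map_swap_insert hiR hjR⟩⟩
  · obtain ⟨R, hjR, rfl⟩ : ∃ R, j ∉ R ∧ S = insert j R :=
      ⟨S.erase j, notMem_erase j S, (insert_erase (by tauto)).symm⟩
    have hiR : i ∉ R := by simp_all
    exact ⟨R, hiR, hjR, .inr ⟨rfl, swap_comm i j ▸ map_swap_insert hjR hiR⟩⟩

end Finset

namespace SymmetricPlayers

variable {N : Type} [DecidableEq N] {C : Finset (Finset N)} {v : {T : Finset N // T ∈ C} → ℝ}
  {i j : N}

theorem map_swap_mem_iff (h : SymmetricPlayers C v i j) (S : Finset N) :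
    S.map (swap i j).toEmbedding ∈ C ↔ S ∈ C := by
  obtain hS | ⟨R, hiR, hjR, ⟨rfl, hS⟩ | ⟨rfl, hS⟩⟩ := map_swap_cases i j S <;>
    rw [hS]
  · exact (h R hiR hjR).1.symm
  · exact (h R hiR hjR).1

theorem apply_map_swap (h : SymmetricPlayers C v i j) {S : Finset N} (hS : S ∈ C)
    (hS' : S.map (swap i j).toEmbedding ∈ C) :
    v ⟨S.map (swap i j).toEmbedding, hS'⟩ = v ⟨S, hS⟩ := by
  obtain hS'' | ⟨R, hiR, hjR, ⟨rfl, hS''⟩ | ⟨rfl, hS''⟩⟩ := map_swap_cases i j S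
  · exact congrArg v (Subtype.ext hS'')
  · rw [(h R hiR hjR).2 hS (hS'' ▸ hS')]
    exact congrArg v (Subtype.ext hS'')
  · rw [← (h R hiR hjR).2 (hS'' ▸ hS') hS]
    exact congrArg v (Subtype.ext hS'')

end SymmetricPlayers

section Relabelling

variable {N : Type} {C : Finset (Finset N)} (π : Perm N)
  (hC : ∀ S : Finset N, S.map π.toEmbedding ∈ C ↔ S ∈ C)

def permCoalitions : Perm {S : Finset N // S ∈ C} :=
  Perm.subtypePerm π.finsetCongr hC

@[simp]
theorem coe_permCoalitions (S : {S : Finset N // S ∈ C}) :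
    (permCoalitions π hC S).1 = S.1.map π.toEmbedding :=
  rfl

@[simp]
theorem coe_permCoalitions_symm (S : {S : Finset N // S ∈ C}) :
    ((permCoalitions π hC).symm S).1 = S.1.map π.symm.toEmbedding :=
  rfl

theorem mmGame_permCoalitions_symm [DecidableEq N] (S T : {S : Finset N // S ∈ C}) :
    mmGame C ((permCoalitions π hC).symm S).1 T = mmGame C S.1 (permCoalitions π hC T) := by
  have hmeet : (S.1.map π.symm.toEmbedding ∩ T.1).Nonempty ↔
      (S.1 ∩ T.1.map π.toEmbedding).Nonempty := by
    rw [← map_nonempty (f := π.toEmbedding), map_inter]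
    simp [map_map]
  simp only [mmGame, coe_permCoalitions, coe_permCoalitions_symm]
  exact if_congr hmeet rfl rfl

theorem coeff_permCoalitions [DecidableEq N]
    (hli : LinearIndependent ℝ fun S : {S : Finset N // S ∈ C} => mmGame C S.1)
    {v c : {S : Finset N // S ∈ C} → ℝ} (hv : v = ∑ S, c S • mmGame C S.1)
    (hπv : ∀ T, v (permCoalitions π hC T) = v T) (S : {S : Finset N // S ∈ C}) :
    c (permCoalitions π hC S) = c S := by
  have hvT : ∀ T, v T = ∑ S, c S * mmGame C S.1 T := fun T => by
    simp only [hv, Finset.sum_apply, Pi.smul_apply, smul_eq_mul]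
  refine Fintype.linearIndependent_iffₛ.mp hli (c ∘ permCoalitions π hC) c ?_ S
  ext T
  calc (∑ S, c (permCoalitions π hC S) • mmGame C S.1) T
      = ∑ S, c S * mmGame C ((permCoalitions π hC).symm S).1 T := by
        rw [Finset.sum_apply, ← Equiv.sum_comp (permCoalitions π hC).symm]
        simp only [Equiv.apply_symm_apply, Pi.smul_apply, smul_eq_mul]
    _ = v T := by simp only [mmGame_permCoalitions_symm, ← hvT, hπv]
    _ = (∑ S, c S • mmGame C S.1) T := by rw [← hv]

end Relabelling

theorem symmetric_players_equal_coefficients_general {N : Type}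
    [DecidableEq N] (C : Finset (Finset N))
    (hfs : FullSpan C) (v : {T : Finset N // T ∈ C} → ℝ)
    (c : {S : Finset N // S ∈ C} → ℝ)
    (hv : v = ∑ S : {S : Finset N // S ∈ C}, c S • mmGame C S.1)
    (i j : N) (hsym : SymmetricPlayers C v i j)
    (A : Finset N) (hA : A ∈ C) (hiA : i ∈ A) (hjA : j ∉ A) :
    ∃ hB : insert j (A.erase i) ∈ C,
      c ⟨A, hA⟩ = c ⟨insert j (A.erase i), hB⟩ := by
  have hAB : A.map (swap i j).toEmbedding = insert j (A.erase i) := by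
    rw [← map_swap_insert (notMem_erase i A) (fun h => hjA (mem_of_mem_erase h)),
      insert_erase hiA]
  have hC := hsym.map_swap_mem_iff
  refine ⟨hAB ▸ (hC A).2 hA, ?_⟩
  calc c ⟨A, hA⟩ = c (permCoalitions (swap i j) hC ⟨A, hA⟩) :=
        (coeff_permCoalitions (swap i j) hC hfs.1 hv (fun T => hsym.apply_map_swap T.2 _) _).symm
    _ = c ⟨insert j (A.erase i), _⟩ := congrArg c (Subtype.ext hAB)

/-- If `C` has full span, `v = Σ_{S∈C} c_S • w_S` is the
expansion of `v` in the MM-basis, and players `i, j` are symmetric in `v`,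
then for `A ∈ C` with `i ∈ A`, `j ∉ A`, the coalition `B = (A∖{i})∪{j}` is in
`C` and `c_A = c_B`. -/
theorem symmetric_players_equal_coefficients {N : Type} [Fintype N]
    [DecidableEq N] [Nonempty N] (C : Finset (Finset N)) (hCne : C.Nonempty)
    (hmem : ∀ S ∈ C, S.Nonempty) (hcover : ∀ n : N, ∃ S ∈ C, n ∈ S)
    (hfs : FullSpan C) (v : {T : Finset N // T ∈ C} → ℝ)
    (c : {S : Finset N // S ∈ C} → ℝ)
    (hv : v = ∑ S : {S : Finset N // S ∈ C}, c S • mmGame C S.1)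
    (i j : N) (hsym : SymmetricPlayers C v i j)
    (A : Finset N) (hA : A ∈ C) (hiA : i ∈ A) (hjA : j ∉ A) :
    ∃ hB : insert j (A.erase i) ∈ C,
      c ⟨A, hA⟩ = c ⟨insert j (A.erase i), hB⟩ :=
  symmetric_players_equal_coefficients_general C hfs v c hv i j hsym A hA hiA hjA
end

section
/- Assume C is a semi-algebra (N ∈ C and for every S ∈ C with S ≠ N also N∖S ∈ C). For every S ∈ C, the dual of the MM-game w_S is the unanimity game v_S, and the dual of the unanimity game v_S is the MM-game w_S: (w_S)* = v_S and (v_S)* = w_S. -/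
open Finset
open scoped Classical

/-- The extension of a game `v : C → ℝ` to all of `2^N` by `0`. -/
noncomputable def extendGame {N : Type} [DecidableEq N] (C : Finset (Finset N))
    (v : {T : Finset N // T ∈ C} → ℝ) (S : Finset N) : ℝ :=
  if h : S ∈ C then v ⟨S, h⟩ else 0

/-- The dual game `v*` of `v : C → ℝ` (for a semi-algebra `C`):
`v*(T) = v(N) − v(N∖T)`, with `v(∅)` understood to be `0`. -/
noncomputable def dualGame {N : Type} [Fintype N] [DecidableEq N]
    (C : Finset (Finset N)) (v : {T : Finset N // T ∈ C} → ℝ) :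
    {T : Finset N // T ∈ C} → ℝ :=
  fun T => extendGame C v Finset.univ - extendGame C v (Finset.univ \ T.1)

/-- The unanimity game `v_S`, as a vector in `ℝ^C`:
`v_S(T) = 1` if `S ⊆ T` and `0` otherwise. -/
noncomputable def unanimityGame {N : Type} [DecidableEq N]
    (C : Finset (Finset N)) (S : Finset N) : {T : Finset N // T ∈ C} → ℝ :=
  fun T => if S ⊆ T.1 then 1 else 0

namespace IsSemiAlgebra

variable {N : Type} [Fintype N] [DecidableEq N] {C : Finset (Finset N)}

-- `Tᶜ` lies in `C` unless `T = N`; then `Tᶜ = ∅`, possibly outside `C`, where `f ∅ = 0`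
-- makes the zero extension agree with `f` anyway.
theorem extendGame_compl (hC : IsSemiAlgebra C) {f : Finset N → ℝ} (hf : f ∅ = 0)
    {T : Finset N} (hT : T ∈ C) : extendGame C (fun U => f U.1) Tᶜ = f Tᶜ := by
  by_cases hTuniv : T = univ
  · subst hTuniv
    rw [compl_univ, hf, extendGame]
    split_ifs
    exacts [hf, rfl]
  · rw [compl_eq_univ_sdiff, extendGame, dif_pos (hC.2 T hT hTuniv)]

theorem dualGame_apply (hC : IsSemiAlgebra C) {f : Finset N → ℝ} (hf : f ∅ = 0)
    (T : {T : Finset N // T ∈ C}) :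
    dualGame C (fun U => f U.1) T = f univ - f T.1ᶜ := by
  rw [dualGame, ← compl_eq_univ_sdiff, hC.extendGame_compl hf T.2, extendGame, dif_pos hC.1]

theorem dualGame_mmGame (hC : IsSemiAlgebra C) {S : Finset N} (hS : S.Nonempty) :
    dualGame C (mmGame C S) = unanimityGame C S := by
  funext T
  refine (hC.dualGame_apply (f := fun U => if (S ∩ U).Nonempty then 1 else 0)
    (by simp) T).trans ?_
  simp only [inter_univ, hS, if_true, ← not_disjoint_iff_nonempty_inter, disjoint_compl_right_iff]
  by_cases hST : S ⊆ T.1 <;> simp [unanimityGame, hST]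

theorem dualGame_unanimityGame (hC : IsSemiAlgebra C) {S : Finset N} (hS : S.Nonempty) :
    dualGame C (unanimityGame C S) = mmGame C S := by
  funext T
  refine (hC.dualGame_apply (f := fun U => if S ⊆ U then 1 else 0)
    (by simpa using hS.ne_empty) T).trans ?_
  simp only [subset_univ, if_true, le_compl_iff_disjoint_right]
  by_cases hST : Disjoint S T.1 <;> simp [mmGame, ← not_disjoint_iff_nonempty_inter, hST]

end IsSemiAlgebra

theorem mm_unanimity_dual_general {N : Type} [Fintype N] [DecidableEq N]
    (C : Finset (Finset N))
    (hmem : ∀ S ∈ C, S.Nonempty)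
    (hsa : IsSemiAlgebra C) (S : Finset N) (hS : S ∈ C) :
    dualGame C (mmGame C S) = unanimityGame C S ∧
    dualGame C (unanimityGame C S) = mmGame C S :=
  ⟨hsa.dualGame_mmGame (hmem S hS), hsa.dualGame_unanimityGame (hmem S hS)⟩

/-- If `C` is a semi-algebra, then for every `S ∈ C` the MM-game
`w_S` and the unanimity game `v_S` are duals of each other:
`(w_S)* = v_S` and `(v_S)* = w_S`. -/
theorem mm_unanimity_dual {N : Type} [Fintype N] [DecidableEq N] [Nonempty N]
    (C : Finset (Finset N)) (hCne : C.Nonempty)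
    (hmem : ∀ S ∈ C, S.Nonempty) (hcover : ∀ n : N, ∃ S ∈ C, n ∈ S)
    (hsa : IsSemiAlgebra C) (S : Finset N) (hS : S ∈ C) :
    dualGame C (mmGame C S) = unanimityGame C S ∧
    dualGame C (unanimityGame C S) = mmGame C S :=
  mm_unanimity_dual_general C hmem hsa S hS
end
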